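/- Let X be a copositive matrix and let τ(i), τ(j) be two distinct minimal zeros of X. Then supp(τ(i)) is not a subset of supp(τ(j)). -/
import Mathlib

open Matrix BigOperators

def Copositive {p : ℕ} (X : Matrix (Fin p) (Fin p) ℝ) : Prop :=
  ∀ t : Fin p → ℝ, (∀ k, 0 ≤ t k) → 0 ≤ t ⬝ᵥ X.mulVec t

def IsZeroOf {p : ℕ} (X : Matrix (Fin p) (Fin p) ℝ) (τ : Fin p → ℝ) : Prop :=
  (∀ k, 0 ≤ τ k) ∧ τ ≠ 0 ∧ τ ⬝ᵥ X.mulVec τ = 0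

def supp {p : ℕ} (t : Fin p → ℝ) : Set (Fin p) := {k | 0 < t k}

def IsMinimalZero {p : ℕ} (X : Matrix (Fin p) (Fin p) ℝ) (τ : Fin p → ℝ) : Prop :=
  IsZeroOf X τ ∧ ∀ t : Fin p → ℝ, IsZeroOf X t → ¬ (supp t ⊂ supp τ)

lemma symm_dot {p : ℕ} (X : Matrix (Fin p) (Fin p) ℝ) (hX : X.IsSymm) (v w : Fin p → ℝ) :
    v ⬝ᵥ X *ᵥ w = (X *ᵥ v) ⬝ᵥ w := by
  rw [Matrix.dotProduct_mulVec, ← Matrix.mulVec_transpose, hX]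

lemma zero_mulVec_eq_zero {p : ℕ} (X : Matrix (Fin p) (Fin p) ℝ) (hX : X.IsSymm)
    (hcop : Copositive X) (τ : Fin p → ℝ) (hτ : IsZeroOf X τ) (k : Fin p) (hk : 0 < τ k) :
    X.mulVec τ k = 0 := by
  obtain ⟨hpos, -, hzero⟩ := hτ
  set a : ℝ := X k k with ha
  set b : ℝ := X.mulVec τ k with hb
  have key : ∀ s : ℝ, -τ k ≤ s → 0 ≤ a * s ^ 2 + 2 * b * s := by
    intro s hs
    set e : Fin p → ℝ := Pi.single k s with he
    have hnn : ∀ m, 0 ≤ (τ + e) m := by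
      intro m
      by_cases hm : m = k
      · subst hm; simp only [Pi.add_apply, he, Pi.single_eq_same]; linarith
      · simp [he, Pi.single_eq_of_ne hm, hpos m]
    have h0 := hcop _ hnn
    have hexp : (τ + e) ⬝ᵥ X.mulVec (τ + e)
        = τ ⬝ᵥ X.mulVec τ + a * s ^ 2 + 2 * b * s := by
      rw [Matrix.mulVec_add, dotProduct_add, add_dotProduct,
        add_dotProduct]
      have h1 : τ ⬝ᵥ X *ᵥ e = b * s := by
        rw [he, symm_dot X hX, dotProduct_single]
      have h2 : e ⬝ᵥ X *ᵥ τ = s * b := by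
        rw [he, single_dotProduct]
      have h3 : e ⬝ᵥ X *ᵥ e = a * s ^ 2 := by
        rw [he, single_dotProduct]
        have : (X *ᵥ (Pi.single k s : Fin p → ℝ)) k = a * s := by
          simp [Matrix.mulVec, dotProduct_single, ha]
        rw [this]; ring
      rw [h1, h2, h3]; ring
    rw [hexp, hzero] at h0
    linarith
  by_contra hb0
  have habs := le_abs_self a
  have h1 : (0:ℝ) < |a| + 1 := by positivity
  rcases lt_or_gt_of_ne hb0 with hneg | hposb
  · -- b < 0 : take small positive s
    set δ : ℝ := -b / (|a| + 1) with hδdef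
    have hδ : (0:ℝ) < δ := div_pos (by linarith) h1
    have hbδ : δ * (|a| + 1) = -b := by
      rw [hδdef]; field_simp
    have h := key δ (by linarith)
    nlinarith [sq_nonneg δ, abs_nonneg a]
  · -- b > 0 : take small negative s
    set δ : ℝ := min (τ k) (b / (|a| + 1)) with hδdef
    have hδ : 0 < δ := lt_min hk (by positivity)
    have hδ1 : δ ≤ τ k := min_le_left _ _
    have hδle : δ ≤ b / (|a| + 1) := min_le_right _ _
    have h := key (-δ) (by linarith)
    have hδb : δ * (|a| + 1) ≤ b := by
      rw [← le_div_iff₀ h1]; exact hδle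
    nlinarith [sq_nonneg δ, abs_nonneg a]

theorem supports_of_distinct_minimal_zeros_not_subset {p : ℕ}
    (X : Matrix (Fin p) (Fin p) ℝ) (hX : X.IsSymm) (hcop : Copositive X)
    (τi τj : Fin p → ℝ)
    (hi : IsMinimalZero X τi) (hinorm : ∑ k, |τi k| = 1)
    (hj : IsMinimalZero X τj) (hjnorm : ∑ k, |τj k| = 1)
    (hne : τi ≠ τj) :
    ¬ (supp τi ⊆ supp τj) := by
  intro hsub
  obtain ⟨⟨hipos, hine, hiz⟩, -⟩ := hi
  obtain ⟨⟨hjpos, hjne, hjz⟩, hjmin⟩ := hj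
  have hSne : ∃ k, 0 < τi k := by
    by_contra h
    push_neg at h
    exact hine (funext fun k => le_antisymm (h k) (hipos k))
  set S : Finset (Fin p) := Finset.univ.filter (fun k => 0 < τi k) with hS
  have hSnonempty : S.Nonempty := by
    obtain ⟨k, hk⟩ := hSne
    exact ⟨k, by simp [hS, hk]⟩
  set s : ℝ := S.inf' hSnonempty (fun k => τj k / τi k) with hsdef
  obtain ⟨m, hmS, hms⟩ := S.exists_mem_eq_inf' hSnonempty (fun k => τj k / τi k)
  have hmi : 0 < τi m := by simpa [hS] using hmS
  have hmj : 0 < τj m := hsub hmi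
  have hspos : 0 < s := by
    rw [hsdef, hms]; positivity
  have hsle : ∀ k, 0 < τi k → s * τi k ≤ τj k := by
    intro k hk
    have h1 : s ≤ τj k / τi k := Finset.inf'_le _ (by simp [hS, hk])
    calc s * τi k ≤ (τj k / τi k) * τi k := by nlinarith
    _ = τj k := div_mul_cancel₀ _ hk.ne'
  set t : Fin p → ℝ := fun k => τj k - s * τi k with ht
  have htpos : ∀ k, 0 ≤ t k := by
    intro k
    rcases (hipos k).lt_or_eq with hk | hk
    · have := hsle k hk
      show 0 ≤ τj k - s * τi k
      linarith
    · show 0 ≤ τj k - s * τi k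
      rw [← hk, mul_zero, sub_zero]; exact hjpos k
  have htm : t m = 0 := by
    show τj m - s * τi m = 0
    rw [hsdef, hms, div_mul_cancel₀ _ hmi.ne', sub_self]
  have hij : τi ⬝ᵥ X.mulVec τj = 0 := by
    rw [dotProduct]
    apply Finset.sum_eq_zero
    intro k _
    rcases (hipos k).lt_or_eq with hk | hk
    · rw [zero_mulVec_eq_zero X hX hcop τj ⟨hjpos, hjne, hjz⟩ k (hsub hk), mul_zero]
    · rw [← hk, zero_mul]
  have hji : τj ⬝ᵥ X.mulVec τi = 0 := by
    rw [symm_dot X hX, dotProduct_comm, hij]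
  have htz : t ⬝ᵥ X.mulVec t = 0 := by
    have ht' : t = τj - s • τi := by funext k; simp [ht]
    rw [ht']
    simp [Matrix.mulVec_sub, Matrix.mulVec_smul, sub_dotProduct,
      dotProduct_sub, smul_dotProduct, dotProduct_smul,
      hij, hji, hiz, hjz]
  by_cases ht0 : t = 0
  · have hτji : ∀ k, τj k = s * τi k := by
      intro k
      have h : τj k - s * τi k = 0 := congrFun ht0 k
      linarith
    have hsum : ∑ k, |τj k| = s * ∑ k, |τi k| := by
      rw [Finset.mul_sum]
      apply Finset.sum_congr rfl
      intro k _
      rw [hτji k, abs_mul, abs_of_pos hspos]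
    rw [hinorm, hjnorm, mul_one] at hsum
    apply hne
    funext k
    rw [hτji k, ← hsum, one_mul]
  · refine hjmin t ⟨htpos, ht0, htz⟩ ⟨?_, ?_⟩
    · intro k hk
      have hk' : 0 < τj k - s * τi k := hk
      have h2 : 0 ≤ s * τi k := mul_nonneg hspos.le (hipos k)
      show 0 < τj k
      linarith
    · intro habs
      have h3 := habs hmj
      simp only [supp, Set.mem_setOf_eq, htm] at h3
      exact lt_irrefl 0 h3
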